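/- arXiv:2403.01537 — 4 statements merged into one kernel-verified Lean document; each statement's English description precedes it below -/
import Mathlib

section
/- Let S be a measurable space, let r : S × S → ℝ be measurable with 0 ≤ r(s,ξ) ≤ B for all s, ξ, let P′ᵢ and Pⱼ be probability measures on S, and set c(s) = ∫ r(s,ξ) dPⱼ(ξ) and Z = ∫ exp(−c(s)) dP′ᵢ(s). Then the Bayesian posterior P* defined as the measure with density s ↦ exp(−c(s))/Z with respect to P′ᵢ is a probability measure, and for every probability measure P on S one has E_{P*,Pⱼ}[r] + D(P*‖P′ᵢ) ≤ E_{P,Pⱼ}[r] + D(P‖P′ᵢ); i.e., the Bayesian posterior is a global minimizer over all probability measures P of the objective E_{P,Pⱼ}[r] + D(P‖P′ᵢ). -/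
open MeasureTheory Real

/- Kullback–Leibler divergence `D(P‖Q)`: the integral of the log-likelihood ratio `llr P Q`
with respect to `P`, with value `+∞` when `P` is not absolutely continuous with respect to
`Q` (or when the log-likelihood ratio is not integrable). -/
open Classical in
noncomputable def KL {S : Type*} [MeasurableSpace S] (P Q : Measure S) : EReal :=
  if P ≪ Q ∧ Integrable (llr P Q) P then ((∫ x, llr P Q x ∂P : ℝ) : EReal) else ⊤

/- Expected collision risk `E_{P,Q}[r] = ∫∫ r(s,ξ) dQ(ξ) dP(s)`. -/
noncomputable def expRisk {S : Type*} [MeasurableSpace S] (r : S → S → ℝ)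
    (P Q : Measure S) : ℝ :=
  ∫ s, ∫ ξ, r s ξ ∂Q ∂P

/- Gibbs posterior: the measure with density `s ↦ exp (-c s) / Z` with respect to `Q`,
where `Z = ∫ exp (-c t) dQ(t)`. -/
noncomputable def gibbs {S : Type*} [MeasurableSpace S] (Q : Measure S) (c : S → ℝ) :
    Measure S :=
  Q.withDensity fun s => ENNReal.ofReal (Real.exp (-c s) / ∫ t, Real.exp (-c t) ∂Q)

section

variable {S : Type*} [MeasurableSpace S]

lemma integral_llr_nonneg {P Q : Measure S} [IsProbabilityMeasure P] [IsProbabilityMeasure Q]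
    (hPQ : P ≪ Q) (h_int : Integrable (llr P Q) P) : 0 ≤ ∫ x, llr P Q x ∂P := by
  simpa using InformationTheory.integral_llr_add_sub_measure_univ_nonneg hPQ h_int

lemma KL_of_ac_of_integrable {P Q : Measure S} (hPQ : P ≪ Q) (h_int : Integrable (llr P Q) P) :
    KL P Q = ((∫ x, llr P Q x ∂P : ℝ) : EReal) := by
  rw [KL, if_pos ⟨hPQ, h_int⟩]

lemma integrable_exp_neg_of_norm_le {μ : Measure S} [IsFiniteMeasure μ] {c : S → ℝ} {B : ℝ}
    (hc : Measurable c) (hcB : ∀ s, ‖c s‖ ≤ B) : Integrable (fun s => exp (-c s)) μ := by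
  refine Integrable.of_bound (by fun_prop) (exp B) (ae_of_all _ fun s => ?_)
  rw [norm_of_nonneg (exp_pos _).le, exp_le_exp]
  exact (neg_le_abs _).trans (hcB s)

namespace gibbs

variable {Q : Measure S} {c : S → ℝ}

lemma eq_tilted (Q : Measure S) (c : S → ℝ) : gibbs Q c = Q.tilted (-c) := rfl

lemma isProbabilityMeasure [IsProbabilityMeasure Q]
    (hexp : Integrable (fun s => exp (-c s)) Q) :
    IsProbabilityMeasure (gibbs Q c) :=
  isProbabilityMeasure_tilted hexp

lemma KL_eq [IsProbabilityMeasure Q] (hexp : Integrable (fun s => exp (-c s)) Q)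
    (hc : Integrable c (gibbs Q c)) :
    KL (gibbs Q c) Q
      = ((-∫ s, c s ∂gibbs Q c - log (∫ s, exp (-c s) ∂Q) : ℝ) : EReal) := by
  have := isProbabilityMeasure hexp
  have hac : gibbs Q c ≪ Q := tilted_absolutelyContinuous Q _
  have hllr : llr (gibbs Q c) Q =ᵐ[gibbs Q c] fun s => -c s - log (∫ s, exp (-c s) ∂Q) :=
    hac.ae_le (log_rnDeriv_tilted_left_self hexp)
  rw [KL_of_ac_of_integrable hac ((hc.neg.sub (integrable_const _)).congr hllr.symm),
    integral_congr_ae hllr, integral_sub (f := fun s => -c s) hc.neg (integrable_const _),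
    integral_neg]
  simp

theorem integral_add_KL_le [IsProbabilityMeasure Q] (hexp : Integrable (fun s => exp (-c s)) Q)
    (hc : Integrable c (gibbs Q c)) (P : Measure S) [IsProbabilityMeasure P]
    (hcP : Integrable c P) :
    ((∫ s, c s ∂gibbs Q c : ℝ) : EReal) + KL (gibbs Q c) Q
      ≤ ((∫ s, c s ∂P : ℝ) : EReal) + KL P Q := by
  have := isProbabilityMeasure hexp
  rw [KL_eq hexp hc, ← EReal.coe_add]
  by_cases hP : P ≪ Q ∧ Integrable (llr P Q) P
  swap
  · rw [KL, if_neg hP, EReal.coe_add_top]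
    exact le_top
  obtain ⟨hPQ, h_int⟩ := hP
  -- `D(P‖gibbs) = ∫ c dP + D(P‖Q) + log Z`, and Gibbs' inequality makes it nonnegative.
  have hPG : P ≪ gibbs Q c := hPQ.trans (absolutelyContinuous_tilted hexp)
  have hgibbs := integral_llr_nonneg hPG (integrable_llr_tilted_right hPQ hcP.neg h_int hexp)
  rw [eq_tilted, integral_llr_tilted_right hPQ hcP.neg hexp h_int] at hgibbs
  simp only [Pi.neg_apply, integral_neg] at hgibbs
  rw [KL_of_ac_of_integrable hPQ h_int, ← EReal.coe_add, EReal.coe_le_coe_iff]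
  linarith

end gibbs

end

/-- The two-agent Bayesian posterior, i.e. the measure with density
`s ↦ exp (-c s) / Z` with respect to the nominal strategy `P'i`, where
`c s = ∫ r(s,ξ) dPⱼ(ξ)` and `Z = ∫ exp (-c s) dP'i(s)`, is a probability measure and is a
global minimizer over all probability measures `P` of `E_{P,Pⱼ}[r] + D(P‖P'i)`. -/
theorem bayesian_posterior_is_prob_and_global_minimizer
    {S : Type*} [MeasurableSpace S] (B : ℝ) (r : S → S → ℝ)
    (hr : Measurable (Function.uncurry r))
    (hr0 : ∀ s ξ, 0 ≤ r s ξ) (hrB : ∀ s ξ, r s ξ ≤ B)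
    (P'i Pj : Measure S) [IsProbabilityMeasure P'i] [IsProbabilityMeasure Pj] :
    let Pstar : Measure S := gibbs P'i fun s => ∫ ξ, r s ξ ∂Pj
    IsProbabilityMeasure Pstar ∧
      ∀ P : Measure S, IsProbabilityMeasure P →
        (expRisk r Pstar Pj : EReal) + KL Pstar P'i
          ≤ (expRisk r P Pj : EReal) + KL P P'i := by
  set c : S → ℝ := fun s => ∫ ξ, r s ξ ∂Pj
  have hc : Measurable c := hr.stronglyMeasurable.integral_prod_right'.measurable
  have hcB : ∀ s, ‖c s‖ ≤ B := fun s => by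
    simpa using norm_integral_le_of_norm_le_const (μ := Pj)
      (ae_of_all _ fun ξ => (norm_of_nonneg (hr0 s ξ)).trans_le (hrB s ξ))
  have hc_int (μ : Measure S) [IsFiniteMeasure μ] : Integrable c μ :=
    .of_bound hc.aestronglyMeasurable B (ae_of_all _ hcB)
  have hexp := integrable_exp_neg_of_norm_le (μ := P'i) hc hcB
  have hprob := gibbs.isProbabilityMeasure hexp
  exact ⟨hprob, fun P _ => gibbs.integral_add_KL_le hexp (hc_int _) P (hc_int P)⟩
end

section
/- Let S be a measurable space, let Q be a probability measure on S, and let c : S → ℝ be measurable with 0 ≤ c(s) ≤ C for all s and some constant C ≥ 0. Set Z = ∫ exp(−c(s)) dQ(s) and let G be the probability measure with density s ↦ exp(−c(s))/Z with respect to Q. Then the minimum value of the objective P ↦ ∫ c dP + D(P‖Q) over probability measures P is attained at G and equals −log Z; that is, ∫ c dG + D(G‖Q) = −log ∫ exp(−c(s)) dQ(s). -/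
open MeasureTheory Real

/-- The minimum of `P ↦ ∫ c dP + D(P‖Q)` over probability measures is attained at the Gibbs
posterior `G` and equals `-log Z` where `Z = ∫ exp (-c) dQ`. -/
theorem gibbs_posterior_min_value
    {S : Type*} [MeasurableSpace S] (Q : Measure S) [IsProbabilityMeasure Q]
    (C : ℝ) (hC : 0 ≤ C) (c : S → ℝ) (hc : Measurable c)
    (hc0 : ∀ s, 0 ≤ c s) (hcC : ∀ s, c s ≤ C) :
    (∀ P : Measure S, IsProbabilityMeasure P →
        ((∫ s, c s ∂(gibbs Q c) : ℝ) : EReal) + KL (gibbs Q c) Q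
          ≤ ((∫ s, c s ∂P : ℝ) : EReal) + KL P Q) ∧
      ((∫ s, c s ∂(gibbs Q c) : ℝ) : EReal) + KL (gibbs Q c) Q
        = ((-Real.log (∫ t, Real.exp (-c t) ∂Q) : ℝ) : EReal) := by
  classical
  set Z : ℝ := ∫ t, Real.exp (-c t) ∂Q with hZ
  have hexp_int : Integrable (fun s => Real.exp (-c s)) Q := by
    refine Integrable.mono' (integrable_const 1) (hc.neg.exp.aestronglyMeasurable) ?_
    filter_upwards with s
    rw [Real.norm_eq_abs, abs_of_pos (Real.exp_pos _)]
    exact Real.exp_le_one_iff.2 (neg_nonpos.2 (hc0 s))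
  have hexp_int' : Integrable (fun s => Real.exp ((fun t => -c t) s)) Q := hexp_int
  have hZpos : 0 < Z := integral_exp_pos hexp_int
  have hGprob : IsProbabilityMeasure (gibbs Q c) :=
    isProbabilityMeasure_tilted (f := fun s => -c s) hexp_int'
  have hGQ : gibbs Q c ≪ Q := tilted_absolutelyContinuous Q (fun s => -c s)
  have hQG : Q ≪ gibbs Q c := absolutelyContinuous_tilted (f := fun s => -c s) hexp_int'
  have hc_int : ∀ (P : Measure S), IsProbabilityMeasure P → Integrable c P := by
    intro P hP
    refine Integrable.mono' (integrable_const C) hc.aestronglyMeasurable ?_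
    filter_upwards with s
    rw [Real.norm_eq_abs, abs_of_nonneg (hc0 s)]
    exact hcC s
  -- llr (gibbs Q c) Q = -c - log Z  a.e.
  have hllrG : llr (gibbs Q c) Q =ᵐ[Q] fun x => -c x - Real.log Z := by
    have h1 : llr (gibbs Q c) Q =ᵐ[Q]
        fun x => (fun s => -c s) x - Real.log Z + llr Q Q x :=
      llr_tilted_left (f := fun s => -c s) Measure.AbsolutelyContinuous.rfl hexp_int'
        hc.neg.aemeasurable
    have h2 : llr Q Q =ᵐ[Q] fun _ => (0 : ℝ) := by
      filter_upwards [Measure.rnDeriv_self Q] with x hx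
      simp [llr, hx]
    filter_upwards [h1, h2] with x hx1 hx2
    rw [hx1, hx2, add_zero]
  have hllrG' : llr (gibbs Q c) Q =ᵐ[gibbs Q c] fun x => -c x - Real.log Z := hGQ.ae_le hllrG
  have hllrG_int : Integrable (llr (gibbs Q c) Q) (gibbs Q c) := by
    refine Integrable.congr ?_ hllrG'.symm
    exact ((hc_int _ hGprob).neg.sub (integrable_const _))
  -- value at the Gibbs posterior
  have hval : (∫ s, c s ∂(gibbs Q c) : ℝ) + ∫ x, llr (gibbs Q c) Q x ∂(gibbs Q c)
      = -Real.log Z := by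
    have h3 : ∫ x, llr (gibbs Q c) Q x ∂(gibbs Q c)
        = ∫ x, (-c x - Real.log Z) ∂(gibbs Q c) := integral_congr_ae hllrG'
    have h4 : ∫ x, (-c x - Real.log Z) ∂(gibbs Q c)
        = (∫ x, -c x ∂(gibbs Q c)) - ∫ x, (Real.log Z : ℝ) ∂(gibbs Q c) :=
      integral_sub (hc_int _ hGprob).neg (integrable_const _)
    have h5 : ∫ x, -c x ∂(gibbs Q c) = - ∫ x, c x ∂(gibbs Q c) := integral_neg c
    have h6 : ∫ x, (Real.log Z : ℝ) ∂(gibbs Q c) = Real.log Z := by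
      simp [measure_univ]
    rw [h3, h4, h5, h6]; ring
  have hKLG : KL (gibbs Q c) Q
      = ((∫ x, llr (gibbs Q c) Q x ∂(gibbs Q c) : ℝ) : EReal) := by
    rw [KL, if_pos ⟨hGQ, hllrG_int⟩]
  have hvalE : ((∫ s, c s ∂(gibbs Q c) : ℝ) : EReal) + KL (gibbs Q c) Q
      = ((-Real.log Z : ℝ) : EReal) := by
    rw [hKLG, ← EReal.coe_add, hval]
  refine ⟨?_, hvalE⟩
  intro P hP
  rw [hvalE]
  by_cases hPcase : P ≪ Q ∧ Integrable (llr P Q) P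
  · obtain ⟨hPQ, hPint⟩ := hPcase
    rw [KL, if_pos ⟨hPQ, hPint⟩, ← EReal.coe_add, EReal.coe_le_coe_iff]
    have hPG : P ≪ gibbs Q c := hPQ.trans hQG
    have hcP : Integrable (fun x => -c x) P := (hc_int P hP).neg
    have h_eq : ∫ x, llr P (gibbs Q c) x ∂P
        = ∫ x, llr P Q x ∂P - ∫ x, ((fun s => -c s) x) ∂P + Real.log Z :=
      integral_llr_tilted_right (f := fun s => -c s) hPQ hcP hexp_int' hPint
    have h_int_PG : Integrable (llr P (gibbs Q c)) P :=
      integrable_llr_tilted_right (f := fun s => -c s) hPQ hcP hPint hexp_int'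
    -- Gibbs' inequality : 0 ≤ ∫ llr P G dP
    have h_nonneg : 0 ≤ ∫ x, llr P (gibbs Q c) x ∂P := by
      have hexp_eq : (fun x => Real.exp (-llr P (gibbs Q c) x)) =ᵐ[P]
          fun x => ((gibbs Q c).rnDeriv P x).toReal := exp_neg_llr hPG
      have h_rn_int : Integrable (fun x => ((gibbs Q c).rnDeriv P x).toReal) P := by
        have := Measure.integrableOn_toReal_rnDeriv (μ := gibbs Q c) (ν := P)
          (s := Set.univ) (by simp [measure_ne_top])
        simpa [IntegrableOn, Measure.restrict_univ] using this
      have h_exp_int : Integrable (fun x => Real.exp (-llr P (gibbs Q c) x)) P :=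
        h_rn_int.congr hexp_eq.symm
      have hjensen : Real.exp (∫ x, -llr P (gibbs Q c) x ∂P)
          ≤ ∫ x, Real.exp (-llr P (gibbs Q c) x) ∂P :=
        convexOn_exp.map_integral_le (continuous_exp.continuousOn) isClosed_univ
          (Filter.Eventually.of_forall fun _ => Set.mem_univ _) h_int_PG.neg h_exp_int
      have hle1 : ∫ x, Real.exp (-llr P (gibbs Q c) x) ∂P ≤ 1 := by
        rw [integral_congr_ae hexp_eq]
        calc ∫ x, ((gibbs Q c).rnDeriv P x).toReal ∂P
            = ∫ x in Set.univ, ((gibbs Q c).rnDeriv P x).toReal ∂P := by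
              rw [setIntegral_univ]
          _ ≤ ((gibbs Q c) Set.univ).toReal :=
              Measure.setIntegral_toReal_rnDeriv_le (by simp [measure_ne_top])
          _ = 1 := by simp [measure_univ]
      have h7 : Real.exp (∫ x, -llr P (gibbs Q c) x ∂P) ≤ 1 := hjensen.trans hle1
      rw [Real.exp_le_one_iff, integral_neg, neg_nonpos] at h7
      exact h7
    have h8 : ∫ x, ((fun s => -c s) x) ∂P = - ∫ x, c x ∂P := integral_neg c
    rw [h8] at h_eq
    linarith [h_eq ▸ h_nonneg]
  · rw [KL, if_neg hPcase]
    rw [EReal.add_top_of_ne_bot (by exact EReal.coe_ne_bot _)]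
    exact le_top
end

section
/- Let S be a measurable space, let r : S × S → ℝ be measurable with 0 ≤ r(s,ξ) ≤ B for all s, ξ, fix an index i ∈ {1,…,N}, let P′ᵢ be a probability measure on S, and let (Pⱼ)_{j≠i} be probability measures on S. Set c(s) = Σ_{j≠i} ∫ r(s,ξ) dPⱼ(ξ) and Z = ∫ exp(−c(s)) dP′ᵢ(s). Then the Bayesian posterior P* with density s ↦ exp(−c(s))/Z with respect to P′ᵢ satisfies, for every probability measure P on S, Σ_{j≠i} E_{P*,Pⱼ}[r] + D(P*‖P′ᵢ) ≤ Σ_{j≠i} E_{P,Pⱼ}[r] + D(P‖P′ᵢ); i.e., the multi-agent Bayesian posterior is a global minimizer of the objective P ↦ Σ_{j≠i} E_{P,Pⱼ}[r] + D(P‖P′ᵢ). -/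
open MeasureTheory Real

section Aux

variable {S : Type*} [MeasurableSpace S]

/-- A measurable function bounded in absolute value is integrable w.r.t. a finite measure. -/
lemma integrable_of_abs_le {μ : Measure S} [IsFiniteMeasure μ] {f : S → ℝ} {C : ℝ}
    (hm : Measurable f) (hb : ∀ x, |f x| ≤ C) : Integrable f μ :=
  (integrable_const C).mono' hm.aestronglyMeasurable (Filter.Eventually.of_forall hb)

/-- Nonnegativity of the KL divergence integral. -/
lemma integral_llr_nonneg' {μ ν : Measure S} [IsProbabilityMeasure μ] [IsProbabilityMeasure ν]
    (hμν : μ ≪ ν) (h : Integrable (llr μ ν) μ) : 0 ≤ ∫ x, llr μ ν x ∂μ := by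
  have hexp : (fun x => exp (-llr μ ν x)) =ᵐ[μ] fun x => (ν.rnDeriv μ x).toReal :=
    exp_neg_llr hμν
  have hint2 : Integrable (fun x => (ν.rnDeriv μ x).toReal) μ :=
    integrableOn_univ.mp (Measure.integrableOn_toReal_rnDeriv (by simp))
  have hint_exp : Integrable (fun x => exp (-llr μ ν x)) μ := hint2.congr hexp.symm
  have hJ : exp (∫ x, -llr μ ν x ∂μ) ≤ ∫ x, exp (-llr μ ν x) ∂μ := by
    have := ConvexOn.map_integral_le (μ := μ) (f := fun x => -llr μ ν x)
      convexOn_exp continuous_exp.continuousOn isClosed_univ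
      (Filter.Eventually.of_forall fun x => Set.mem_univ _) h.neg ?_
    · exact this
    · exact hint_exp
  have hone : ∫ x, exp (-llr μ ν x) ∂μ ≤ 1 := by
    rw [integral_congr_ae hexp]
    have := Measure.setIntegral_toReal_rnDeriv_le (μ := ν) (ν := μ) (s := Set.univ)
      (by simp)
    simpa using this
  have : exp (∫ x, -llr μ ν x ∂μ) ≤ 1 := hJ.trans hone
  rw [integral_neg] at this
  have := exp_le_one_iff.mp this
  linarith

end Aux

/-- The multi-agent Bayesian posterior for agent `i`, with density proportional to
`exp (-Σ_{j≠i} ∫ r(·,ξ) dPⱼ(ξ))` with respect to the nominal strategy `P'i`, is a global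
minimizer over probability measures `P` of `Σ_{j≠i} E_{P,Pⱼ}[r] + D(P‖P'i)`. -/
theorem multi_agent_bayesian_posterior_global_minimizer
    {S : Type*} [MeasurableSpace S] (B : ℝ) (r : S → S → ℝ)
    (hr : Measurable (Function.uncurry r))
    (hr0 : ∀ s ξ, 0 ≤ r s ξ) (hrB : ∀ s ξ, r s ξ ≤ B)
    (N : ℕ) (i : Fin N) (P'i : Measure S) [IsProbabilityMeasure P'i]
    (P : Fin N → Measure S) (hP : ∀ j, IsProbabilityMeasure (P j)) :
    let Pstar : Measure S :=
      gibbs P'i fun s => ∑ j ∈ Finset.univ.erase i, ∫ ξ, r s ξ ∂(P j)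
    ∀ Q : Measure S, IsProbabilityMeasure Q →
      ((∑ j ∈ Finset.univ.erase i, expRisk r Pstar (P j) : ℝ) : EReal) + KL Pstar P'i
        ≤ ((∑ j ∈ Finset.univ.erase i, expRisk r Q (P j) : ℝ) : EReal) + KL Q P'i := by
  classical
  intro Pstar Q hQ
  set J : Finset (Fin N) := Finset.univ.erase i with hJdef
  set c : S → ℝ := fun s => ∑ j ∈ J, ∫ ξ, r s ξ ∂(P j) with hc_def
  -- basic facts
  have hSne : Nonempty S := by
    by_contra h
    have h1 : P'i Set.univ = 1 := measure_univ
    rw [Set.univ_eq_empty_iff.mpr (not_nonempty_iff.mp h)] at h1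
    simp at h1
  obtain ⟨s0⟩ := hSne
  have hB : 0 ≤ B := le_trans (hr0 s0 s0) (hrB s0 s0)
  have hrint : ∀ s (j : Fin N), Integrable (fun ξ => r s ξ) (P j) := by
    intro s j
    haveI := hP j
    refine (integrable_const B).mono' (hr.comp measurable_prodMk_left).aestronglyMeasurable
      (Filter.Eventually.of_forall fun ξ => ?_)
    rw [Real.norm_eq_abs, abs_of_nonneg (hr0 s ξ)]; exact hrB s ξ
  have hgm : ∀ j : Fin N, Measurable fun s => ∫ ξ, r s ξ ∂(P j) := by
    intro j
    haveI := hP j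
    exact (hr.stronglyMeasurable.integral_prod_right').measurable
  have hg0 : ∀ (j : Fin N) s, 0 ≤ ∫ ξ, r s ξ ∂(P j) := fun j s =>
    integral_nonneg fun ξ => hr0 s ξ
  have hgB : ∀ (j : Fin N) s, ∫ ξ, r s ξ ∂(P j) ≤ B := by
    intro j s
    haveI := hP j
    calc ∫ ξ, r s ξ ∂(P j) ≤ ∫ _, B ∂(P j) :=
          integral_mono (hrint s j) (integrable_const B) fun ξ => hrB s ξ
      _ = B := by simp
  have hcm : Measurable c := by
    rw [hc_def]
    exact Finset.measurable_sum J fun j _ => hgm j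
  have hc0 : ∀ s, 0 ≤ c s := fun s => Finset.sum_nonneg fun j _ => hg0 j s
  have hcK : ∀ s, c s ≤ (J.card : ℝ) * B := by
    intro s
    calc c s ≤ ∑ _j ∈ J, B := Finset.sum_le_sum fun j _ => hgB j s
      _ = (J.card : ℝ) * B := by rw [Finset.sum_const, nsmul_eq_mul]
  have hcint : ∀ (μ : Measure S), IsFiniteMeasure μ → Integrable c μ := by
    intro μ hμ
    exact integrable_of_abs_le hcm fun x => by
      rw [abs_of_nonneg (hc0 x)]; exact hcK x
  have hint_exp : Integrable (fun x => exp (-c x)) P'i := by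
    refine (integrable_const 1).mono' (hcm.neg.exp).aestronglyMeasurable
      (Filter.Eventually.of_forall fun s => ?_)
    rw [Real.norm_eq_abs, abs_of_nonneg (exp_pos _).le]
    exact exp_le_one_iff.mpr (neg_nonpos.mpr (hc0 s))
  set Z : ℝ := ∫ t, exp (-c t) ∂P'i with hZdef
  have hPt : Pstar = P'i.tilted fun s => -c s := rfl
  haveI hPsprob : IsProbabilityMeasure Pstar := by
    rw [hPt]; exact isProbabilityMeasure_tilted hint_exp
  have hPs_ac : Pstar ≪ P'i := hPt ▸ tilted_absolutelyContinuous P'i _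
  have h_ac2 : P'i ≪ Pstar := hPt ▸ absolutelyContinuous_tilted hint_exp
  -- sum of expected risks is the integral of c
  have hsum : ∀ (μ : Measure S), IsFiniteMeasure μ →
      ∑ j ∈ J, expRisk r μ (P j) = ∫ s, c s ∂μ := by
    intro μ hμ
    rw [hc_def]
    rw [integral_finset_sum J fun j _ => integrable_of_abs_le (hgm j) fun s => by
      rw [abs_of_nonneg (hg0 j s)]; exact hgB j s]
    rfl
  -- llr of the posterior
  have hllr : llr Pstar P'i =ᵐ[Pstar] fun x => -c x - Real.log Z := by
    have h1 : llr (P'i.tilted fun s => -c s) P'i =ᵐ[P'i]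
        fun x => (-c x) - Real.log Z + llr P'i P'i x :=
      llr_tilted_left Measure.AbsolutelyContinuous.rfl hint_exp hcm.neg.aemeasurable
    rw [← hPt] at h1
    have h0 : llr P'i P'i =ᵐ[P'i] fun _ => (0 : ℝ) := by
      filter_upwards [Measure.rnDeriv_self P'i] with x hx
      simp [llr, hx]
    filter_upwards [hPs_ac.ae_le h1, hPs_ac.ae_le h0] with x hx1 hx0
    rw [hx1, hx0, add_zero]
  have h_int_star : Integrable (llr Pstar P'i) Pstar := by
    refine Integrable.congr ?_ hllr.symm
    exact ((hcint Pstar inferInstance).neg.sub (integrable_const _))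
  have hKLstar : KL Pstar P'i = ((-∫ s, c s ∂Pstar - Real.log Z : ℝ) : EReal) := by
    rw [KL, if_pos ⟨hPs_ac, h_int_star⟩]
    congr 1
    have hnc : Integrable (fun a => -c a) Pstar := (hcint Pstar inferInstance).neg
    rw [integral_congr_ae hllr, integral_sub hnc (integrable_const _), integral_neg]
    simp
  -- rewrite LHS
  rw [hKLstar, hsum Pstar inferInstance, ← EReal.coe_add]
  have hLHS : (∫ s, c s ∂Pstar) + (-∫ s, c s ∂Pstar - Real.log Z) = -Real.log Z := by ring
  rw [hLHS]
  -- case split on KL Q P'i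
  by_cases hQc : Q ≪ P'i ∧ Integrable (llr Q P'i) Q
  · obtain ⟨hQac, hQint⟩ := hQc
    rw [KL, if_pos ⟨hQac, hQint⟩, hsum Q inferInstance, ← EReal.coe_add, EReal.coe_le_coe_iff]
    -- key inequality via nonnegativity of KL(Q ‖ Pstar)
    have hnegQ : Integrable (fun s => -c s) Q := (hcint Q inferInstance).neg
    have hintQPs : Integrable (llr Q Pstar) Q := by
      rw [hPt]
      exact integrable_llr_tilted_right hQac hnegQ hQint hint_exp
    have h5 : ∫ x, llr Q Pstar x ∂Q
        = ∫ x, llr Q P'i x ∂Q + ∫ s, c s ∂Q + Real.log Z := by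
      rw [hPt]
      rw [integral_llr_tilted_right hQac hnegQ hint_exp hQint, integral_neg]
      ring
    have h6 : 0 ≤ ∫ x, llr Q Pstar x ∂Q :=
      integral_llr_nonneg' (hQac.trans h_ac2) hintQPs
    rw [h5] at h6
    linarith
  · rw [KL, if_neg hQc]
    exact le_top.trans_eq (EReal.coe_add_top _).symm
end

section
/- Let S be a measurable space, let r : S × S → ℝ be measurable with 0 ≤ r(s,ξ) ≤ B, let P′ᵢ, P′ⱼ be nominal probability measures on S, and let Pᵢ, Pⱼ be probability measures on S. Define F(Pᵢ,Pⱼ) = E_{Pᵢ,Pⱼ}[r] + D(Pᵢ‖P′ᵢ) + D(Pⱼ‖P′ⱼ). If Pᵢ⁺ is the Gibbs posterior with density proportional to exp(−∫ r(·,ξ) dPⱼ(ξ)) with respect to P′ᵢ, then F(Pᵢ⁺, Pⱼ) ≤ F(Pᵢ, Pⱼ); i.e., a unilateral Bayesian best-response update of one agent does not increase the two-agent potential F. -/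
/-!
Gibbs variational principle: for a cost `c` and prior `Q` with partition function
`Z = ∫ exp (-c) dQ`, every `μ` satisfies `∫ c dμ + D(μ‖Q) = D(μ‖gibbs Q c) - log Z ≥ -log Z`
(Gibbs' inequality), with equality at `μ = gibbs Q c`. The potential depends on `Pᵢ` only
through `∫ c dPᵢ + D(Pᵢ‖P'ᵢ)` with `c s = ∫ r(s,ξ) dPⱼ(ξ)`, which is bounded since `r` is.
-/

open MeasureTheory Real

section GibbsVariational

variable {S : Type*} [MeasurableSpace S] {Q μ : Measure S} {c : S → ℝ}

/- `gibbs Q c` is definitionally `Q.tilted (-c)`, so Mathlib's API for tilted measures applies. -/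

lemma isProbabilityMeasure_gibbs [NeZero Q] (hexp : Integrable (fun s => exp (-c s)) Q) :
    IsProbabilityMeasure (gibbs Q c) :=
  isProbabilityMeasure_tilted hexp

lemma integral_add_KL_gibbs [SigmaFinite Q] [NeZero Q]
    (hexp : Integrable (fun s => exp (-c s)) Q) (hc : Integrable c (gibbs Q c)) :
    ((∫ s, c s ∂gibbs Q c : ℝ) : EReal) + KL (gibbs Q c) Q
      = ((-log (∫ s, exp (-c s) ∂Q) : ℝ) : EReal) := by
  have := isProbabilityMeasure_gibbs hexp
  have hac : gibbs Q c ≪ Q := tilted_absolutelyContinuous Q _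
  have hllr : llr (gibbs Q c) Q =ᵐ[gibbs Q c] fun s => -c s - log (∫ s, exp (-c s) ∂Q) :=
    hac.ae_le (log_rnDeriv_tilted_left_self hexp)
  rw [KL, if_pos ⟨hac, (hc.neg.sub (integrable_const _)).congr hllr.symm⟩,
    integral_congr_ae hllr, integral_sub (f := fun s => -c s) hc.neg (integrable_const _),
    integral_neg, integral_const, probReal_univ, one_smul]
  norm_cast
  ring

lemma neg_log_le_integral_add_KL [SigmaFinite Q] [NeZero Q] [IsProbabilityMeasure μ]
    (hexp : Integrable (fun s => exp (-c s)) Q) (hc : Integrable c μ) :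
    ((-log (∫ s, exp (-c s) ∂Q) : ℝ) : EReal) ≤ ((∫ s, c s ∂μ : ℝ) : EReal) + KL μ Q := by
  by_cases h : μ ≪ Q ∧ Integrable (llr μ Q) μ
  · have : IsProbabilityMeasure (Q.tilted fun s => -c s) := isProbabilityMeasure_gibbs hexp
    have hgibbs := InformationTheory.integral_llr_add_sub_measure_univ_nonneg
      (h.1.trans (absolutelyContinuous_tilted hexp))
      (integrable_llr_tilted_right h.1 hc.neg h.2 hexp)
    rw [integral_llr_tilted_right (f := fun s => -c s) h.1 hc.neg hexp h.2, integral_neg,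
      probReal_univ, probReal_univ] at hgibbs
    rw [KL, if_pos h]
    norm_cast
    linarith
  · rw [KL, if_neg h, EReal.coe_add_top]
    exact le_top

theorem integral_add_KL_gibbs_le [SigmaFinite Q] [NeZero Q] [IsProbabilityMeasure μ]
    (hexp : Integrable (fun s => exp (-c s)) Q) (hcQ : Integrable c (gibbs Q c))
    (hcμ : Integrable c μ) :
    ((∫ s, c s ∂gibbs Q c : ℝ) : EReal) + KL (gibbs Q c) Q
      ≤ ((∫ s, c s ∂μ : ℝ) : EReal) + KL μ Q :=
  (integral_add_KL_gibbs hexp hcQ).trans_le (neg_log_le_integral_add_KL hexp hcμ)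

end GibbsVariational

theorem unilateral_bayesian_update_decreases_potential_general
    {S : Type*} [MeasurableSpace S] (B : ℝ) (r : S → S → ℝ)
    (hr : Measurable (Function.uncurry r))
    (hr0 : ∀ s ξ, 0 ≤ r s ξ) (hrB : ∀ s ξ, r s ξ ≤ B)
    (P'i P'j Pi Pj : Measure S)
    [IsProbabilityMeasure P'i]
    [IsProbabilityMeasure Pi] [IsProbabilityMeasure Pj] :
    let Piplus : Measure S := gibbs P'i fun s => ∫ ξ, r s ξ ∂Pj
    (expRisk r Piplus Pj : EReal) + KL Piplus P'i + KL Pj P'j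
      ≤ (expRisk r Pi Pj : EReal) + KL Pi P'i + KL Pj P'j := by
  intro Piplus
  set c : S → ℝ := fun s => ∫ ξ, r s ξ ∂Pj
  have hc_meas : Measurable c := hr.stronglyMeasurable.integral_prod_right.measurable
  have hc_bdd (s : S) : ‖c s‖ ≤ B := by
    simpa using norm_integral_le_of_norm_le_const (μ := Pj)
      (ae_of_all _ fun ξ => (Real.norm_of_nonneg (hr0 s ξ)).trans_le (hrB s ξ))
  have hc_int (μ : Measure S) [IsFiniteMeasure μ] : Integrable c μ :=
    .of_bound hc_meas.aestronglyMeasurable B (ae_of_all _ hc_bdd)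
  have hexp : Integrable (fun s => exp (-c s)) P'i :=
    .of_bound (by fun_prop) (exp B) (ae_of_all _ fun s => by
      rw [Real.norm_of_nonneg (exp_nonneg _), exp_le_exp]
      exact (neg_le_abs (c s)).trans (hc_bdd s))
  have := isProbabilityMeasure_gibbs hexp
  exact add_le_add_left (integral_add_KL_gibbs_le hexp (hc_int _) (hc_int _)) _

/-- A unilateral Bayesian best-response update of agent `i` does not increase the two-agent
potential `F(Pᵢ,Pⱼ) = E_{Pᵢ,Pⱼ}[r] + D(Pᵢ‖P'ᵢ) + D(Pⱼ‖P'ⱼ)`. -/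
theorem unilateral_bayesian_update_decreases_potential
    {S : Type*} [MeasurableSpace S] (B : ℝ) (r : S → S → ℝ)
    (hr : Measurable (Function.uncurry r))
    (hr0 : ∀ s ξ, 0 ≤ r s ξ) (hrB : ∀ s ξ, r s ξ ≤ B)
    (P'i P'j Pi Pj : Measure S)
    [IsProbabilityMeasure P'i] [IsProbabilityMeasure P'j]
    [IsProbabilityMeasure Pi] [IsProbabilityMeasure Pj] :
    let Piplus : Measure S := gibbs P'i fun s => ∫ ξ, r s ξ ∂Pj
    (expRisk r Piplus Pj : EReal) + KL Piplus P'i + KL Pj P'j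
      ≤ (expRisk r Pi Pj : EReal) + KL Pi P'i + KL Pj P'j :=
  unilateral_bayesian_update_decreases_potential_general B r hr hr0 hrB P'i P'j Pi Pj
end
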